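/- arXiv:2505.23316 — 4 statements merged into one kernel-verified Lean document; each statement's English description precedes it below -/
import Mathlib

section
/- (Theorem 3.1, exact form) Let Y be a nonempty finite type, μ a probability distribution on Y, p : Y × Y → ℝ with p(y, y') + p(y', y) = 1 for all y, y', β > 0, and π, π_ref in the open simplex Δ. Define the score s(y) := ∑_{y'} μ(y')·p(y, y') − 1/2, the implicit reward r_π(y) := β·log(π(y)/π_ref(y)), the population DPO loss L_DPO(π) := −∑_{y1, y2} μ(y1)·μ(y2)·p(y1, y2)·log σ(r_π(y1) − r_π(y2)), and the reformulated loss L_eDPO(π) := −β·∑_y μ(y)·s(y)·log π(y) + (1/2)·∑_{y1, y2} μ(y1)·μ(y2)·KLB(σ(r_π(y1) − r_π(y2))). Then L_DPO(π) = L_eDPO(π) + β·∑_y μ(y)·s(y)·log π_ref(y) + (1/2)·log 2; in particular L_DPO and L_eDPO differ by a constant independent of π, hence share the same gradient. -/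
noncomputable def sig (t : ℝ) : ℝ := 1 / (1 + Real.exp (-t))

noncomputable def KLB (q : ℝ) : ℝ :=
  (1/2) * Real.log ((1/2) / q) + (1/2) * Real.log ((1/2) / (1 - q))

lemma sig_pos (t : ℝ) : 0 < sig t := by
  unfold sig; positivity

lemma sig_neg_eq (t : ℝ) : sig (-t) = 1 - sig t := by
  unfold sig
  rw [neg_neg]
  have h1 : (0:ℝ) < 1 + Real.exp (-t) := by positivity
  have h2 : (0:ℝ) < 1 + Real.exp t := by positivity
  rw [Real.exp_neg] at *
  have h3 : Real.exp t ≠ 0 := (Real.exp_pos t).ne'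
  field_simp
  ring

lemma sig_mul (t : ℝ) : sig t = Real.exp t * sig (-t) := by
  unfold sig
  rw [neg_neg, Real.exp_neg]
  have h3 : Real.exp t ≠ 0 := (Real.exp_pos t).ne'
  have h1 : (0:ℝ) < 1 + (Real.exp t)⁻¹ := by positivity
  have h2 : (0:ℝ) < 1 + Real.exp t := by positivity
  field_simp
  ring

lemma log_sig (t : ℝ) :
    Real.log (sig t) = -(KLB (sig t)) - Real.log 2 + t/2 := by
  have h1 : 0 < sig t := sig_pos t
  have h2 : 0 < sig (-t) := sig_pos (-t)
  have hq : sig (-t) = 1 - sig t := sig_neg_eq t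
  have hlog : Real.log (sig t) = t + Real.log (1 - sig t) := by
    conv_lhs => rw [sig_mul t]
    rw [Real.log_mul (Real.exp_pos t).ne' (by linarith), Real.log_exp, hq]
  have hK : KLB (sig t) = (1/2)*(Real.log (1/2) - Real.log (sig t))
      + (1/2)*(Real.log (1/2) - Real.log (1 - sig t)) := by
    unfold KLB
    rw [Real.log_div (by norm_num) h1.ne', Real.log_div (by norm_num) (by linarith : (1 - sig t) ≠ 0)]
  have hl2 : Real.log (1/2) = -Real.log 2 := by
    rw [one_div, Real.log_inv]
  rw [hK, hl2]
  linarith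

theorem stmt_5 {Y : Type*} [Fintype Y] [Nonempty Y]
    (μ : Y → ℝ) (hμ0 : ∀ y, 0 ≤ μ y) (hμ1 : ∑ y, μ y = 1)
    (p : Y → Y → ℝ) (hp : ∀ y y', p y y' + p y' y = 1)
    (β : ℝ) (hβ : 0 < β)
    (π πref : Y → ℝ)
    (hπ : ∀ y, 0 < π y) (hπ1 : ∑ y, π y = 1)
    (href : ∀ y, 0 < πref y) (href1 : ∑ y, πref y = 1)
    (s : Y → ℝ) (hs : ∀ y, s y = (∑ y', μ y' * p y y') - 1/2)
    (r : Y → ℝ) (hr : ∀ y, r y = β * Real.log (π y / πref y))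
    (LDPO LeDPO : ℝ)
    (hLDPO : LDPO = -∑ y1, ∑ y2, μ y1 * μ y2 * p y1 y2 * Real.log (sig (r y1 - r y2)))
    (hLeDPO : LeDPO = -β * (∑ y, μ y * s y * Real.log (π y))
        + (1/2) * ∑ y1, ∑ y2, μ y1 * μ y2 * KLB (sig (r y1 - r y2))) :
    LDPO = LeDPO + β * (∑ y, μ y * s y * Real.log (πref y)) + (1/2) * Real.log 2 := by
  -- symmetrization lemma
  have key : ∀ (g : Y → Y → ℝ), (∀ a b, g a b = g b a) →
      (∑ y1, ∑ y2, μ y1 * μ y2 * p y1 y2 * g y1 y2)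
        = (1/2) * ∑ y1, ∑ y2, μ y1 * μ y2 * g y1 y2 := by
    intro g hg
    have h1 : (∑ y1, ∑ y2, μ y1 * μ y2 * p y1 y2 * g y1 y2)
        = ∑ y1, ∑ y2, μ y1 * μ y2 * p y2 y1 * g y1 y2 := by
      rw [Finset.sum_comm]
      refine Finset.sum_congr rfl fun a _ => Finset.sum_congr rfl fun b _ => ?_
      rw [hg]; ring
    have h2 : (∑ y1, ∑ y2, μ y1 * μ y2 * p y1 y2 * g y1 y2)
        + (∑ y1, ∑ y2, μ y1 * μ y2 * p y2 y1 * g y1 y2)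
        = ∑ y1, ∑ y2, μ y1 * μ y2 * g y1 y2 := by
      rw [← Finset.sum_add_distrib]
      refine Finset.sum_congr rfl fun a _ => ?_
      rw [← Finset.sum_add_distrib]
      refine Finset.sum_congr rfl fun b _ => ?_
      linear_combination (μ a * μ b * g a b) * hp a b
    linarith
  -- KLB symmetry
  have hKsym : ∀ a b : Y, KLB (sig (r a - r b)) = KLB (sig (r b - r a)) := by
    intro a b
    have : r b - r a = -(r a - r b) := by ring
    rw [this, sig_neg_eq]
    unfold KLB
    rw [sub_sub_cancel]
    ring
  -- T1
  have hT1 : (∑ y1, ∑ y2, μ y1 * μ y2 * p y1 y2 * KLB (sig (r y1 - r y2)))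
      = (1/2) * ∑ y1, ∑ y2, μ y1 * μ y2 * KLB (sig (r y1 - r y2)) :=
    key _ (fun a b => hKsym a b)
  -- T2
  have hsum2 : (∑ y1, ∑ y2, μ y1 * μ y2 : ℝ) = 1 := by
    simp only [← Finset.mul_sum, hμ1, mul_one]
  have hT2 : (∑ y1, ∑ y2, μ y1 * μ y2 * p y1 y2) = 1/2 := by
    have := key (fun _ _ => 1) (fun _ _ => rfl)
    simp only [mul_one] at this
    rw [this, hsum2]
    norm_num
  -- row and column sums
  have hrow : ∀ a, (∑ b, μ b * p a b) = s a + 1/2 := by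
    intro a; rw [hs]; ring
  have hcol : ∀ b, (∑ a, μ a * p a b) = 1/2 - s b := by
    intro b
    have h1 : (∑ a, μ a * p a b) = ∑ a, (μ a - μ a * p b a) := by
      refine Finset.sum_congr rfl fun a _ => ?_
      linear_combination μ a * hp a b
    rw [h1, Finset.sum_sub_distrib, hμ1, hrow b]
    ring
  -- T3
  have hT3 : (∑ y1, ∑ y2, μ y1 * μ y2 * p y1 y2 * (r y1 - r y2))
      = 2 * ∑ y, μ y * s y * r y := by
    have hsplit : (∑ y1, ∑ y2, μ y1 * μ y2 * p y1 y2 * (r y1 - r y2))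
        = (∑ y1, ∑ y2, μ y1 * r y1 * (μ y2 * p y1 y2))
          - (∑ y1, ∑ y2, μ y2 * r y2 * (μ y1 * p y1 y2)) := by
      rw [← Finset.sum_sub_distrib]
      refine Finset.sum_congr rfl fun a _ => ?_
      rw [← Finset.sum_sub_distrib]
      refine Finset.sum_congr rfl fun b _ => ?_
      ring
    have hA : (∑ y1, ∑ y2, μ y1 * r y1 * (μ y2 * p y1 y2))
        = ∑ y1, μ y1 * r y1 * (s y1 + 1/2) := by
      refine Finset.sum_congr rfl fun a _ => ?_
      rw [← Finset.mul_sum, hrow a]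
    have hB : (∑ y1, ∑ y2, μ y2 * r y2 * (μ y1 * p y1 y2))
        = ∑ y2, μ y2 * r y2 * (1/2 - s y2) := by
      rw [Finset.sum_comm]
      refine Finset.sum_congr rfl fun b _ => ?_
      rw [← Finset.mul_sum, hcol b]
    rw [hsplit, hA, hB, ← Finset.sum_sub_distrib, Finset.mul_sum]
    refine Finset.sum_congr rfl fun a _ => ?_
    ring
  -- expansion of LDPO
  have hE : (∑ y1, ∑ y2, μ y1 * μ y2 * p y1 y2 * Real.log (sig (r y1 - r y2)))
      = -(∑ y1, ∑ y2, μ y1 * μ y2 * p y1 y2 * KLB (sig (r y1 - r y2)))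
        - Real.log 2 * (∑ y1, ∑ y2, μ y1 * μ y2 * p y1 y2)
        + (1/2) * (∑ y1, ∑ y2, μ y1 * μ y2 * p y1 y2 * (r y1 - r y2)) := by
    have h1 : ∀ a b : Y, μ a * μ b * p a b * Real.log (sig (r a - r b))
        = -(μ a * μ b * p a b * KLB (sig (r a - r b)))
          + -(Real.log 2 * (μ a * μ b * p a b))
          + (1/2) * (μ a * μ b * p a b * (r a - r b)) := by
      intro a b; rw [log_sig]; ring
    simp only [h1, Finset.sum_add_distrib, Finset.sum_neg_distrib, ← Finset.mul_sum]
    ring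
  -- relate r to logs
  have hrsum : (∑ y, μ y * s y * r y)
      = β * (∑ y, μ y * s y * Real.log (π y)) - β * (∑ y, μ y * s y * Real.log (πref y)) := by
    have h1 : ∀ y, μ y * s y * r y
        = β * (μ y * s y * Real.log (π y)) - β * (μ y * s y * Real.log (πref y)) := by
      intro y
      rw [hr, Real.log_div (hπ y).ne' (href y).ne']
      ring
    simp only [h1, Finset.sum_sub_distrib, ← Finset.mul_sum]
  rw [hLDPO, hLeDPO, hE, hT1, hT2, hT3, hrsum]
  ring
end

section
/- (Theorem 3.2) Let Y be a nonempty finite type, μ ∈ Δ with μ(y) > 0 for all y, π_ref ∈ Δ, μ̂ a probability distribution on Y (possibly with zero entries), ŝ : Y → ℝ with ∑_y μ̂(y)·ŝ(y) = 0, and α, β > 0. Define the sample-based eDPO loss on Δ by L(π) := −β·∑_y μ̂(y)·ŝ(y)·log π(y) + (α/2)·∑_{y1, y2} μ(y1)·μ(y2)·KLB(σ(r_π(y1) − r_π(y2))), where r_π(y) := β·log(π(y)/π_ref(y)). If π* ∈ Δ minimizes L over Δ, then for every y ∈ Y: α·∑_{y'} μ(y')·[σ(β·log(π*(y)/π_ref(y))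 − β·log(π*(y')/π_ref(y'))) − 1/2] = (μ̂(y)/μ(y))·ŝ(y). -/
open Finset Filter Topology

lemma sig_eq_sigmoid : sig = Real.sigmoid := funext fun _ => one_div _

lemma sig_neg_sub_half (t : ℝ) : sig (-t) - 1/2 = -(sig t - 1/2) := by
  rw [sig_eq_sigmoid, Real.sigmoid_neg]
  ring

lemma hasDerivAt_KLB {q : ℝ} (h₀ : 0 < q) (h₁ : q < 1) :
    HasDerivAt KLB ((q - 1/2) / (q * (1 - q))) q := by
  have h₁' := sub_pos.2 h₁
  have hq : HasDerivAt (fun q => (1/2) / q) (-(1/2) / q ^ 2) q := by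
    simpa [div_eq_mul_inv] using (hasDerivAt_inv h₀.ne').const_mul (1/2 : ℝ)
  have hq' : HasDerivAt (fun q => (1/2) / (1 - q)) ((1/2) / (1 - q) ^ 2) q := by
    simpa [div_eq_mul_inv] using
      (((hasDerivAt_id q).const_sub 1).inv h₁'.ne').const_mul (1/2 : ℝ)
  refine (((hq.log (by positivity)).const_mul (1/2)).fun_add
    ((hq'.log (by positivity)).const_mul (1/2))).congr_deriv ?_
  field_simp
  ring

lemma hasDerivAt_KLB_sig (t : ℝ) : HasDerivAt (fun s => KLB (sig s)) (sig t - 1/2) t := by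
  rw [sig_eq_sigmoid]
  have h₀ := Real.sigmoid_pos t
  have h₁ := sub_pos.2 (Real.sigmoid_lt_one t)
  refine ((hasDerivAt_KLB h₀ (Real.sigmoid_lt_one t)).comp t
    (Real.hasDerivAt_sigmoid t)).congr_deriv ?_
  field_simp

section Pairwise

variable {Y : Type*} [Fintype Y]

lemma sum_sum_eq_zero_of_antisymm {f : Y → Y → ℝ} (hf : ∀ a b, f b a = -f a b) :
    ∑ a, ∑ b, f a b = 0 := by
  have : ∑ a, ∑ b, f a b = ∑ a, ∑ b, -f a b := by
    rw [sum_comm]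
    exact sum_congr rfl fun a _ => sum_congr rfl fun b _ => hf a b
  simp only [sum_neg_distrib] at this
  linarith

/-- `w y * pairGrad w r y` is the partial derivative in `r y` of
`(1/2) * ∑ y₁, ∑ y₂, w y₁ * w y₂ * KLB (sig (r y₁ - r y₂))`. -/
noncomputable def pairGrad (w r : Y → ℝ) (y : Y) : ℝ :=
  ∑ y', w y' * (sig (r y - r y') - 1/2)

lemma sum_mul_pairGrad (w r : Y → ℝ) : ∑ y, w y * pairGrad w r y = 0 := by
  simp only [pairGrad, mul_sum]
  refine sum_sum_eq_zero_of_antisymm fun a b => ?_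
  rw [← neg_sub (r a), sig_neg_sub_half]
  ring

lemma hasDerivAt_sum_sum_KLB (w : Y → ℝ) {u : ℝ → Y → ℝ} {u' : Y → ℝ} {t₀ : ℝ}
    (hu : ∀ y, HasDerivAt (fun t => u t y) (u' y) t₀) :
    HasDerivAt (fun t => ∑ y₁, ∑ y₂, w y₁ * w y₂ * KLB (sig (u t y₁ - u t y₂)))
      (2 * ∑ y, u' y * w y * pairGrad w (u t₀) y) t₀ := by
  refine (HasDerivAt.fun_sum fun y₁ _ => HasDerivAt.fun_sum fun y₂ _ =>
      ((hasDerivAt_KLB_sig _).comp t₀ ((hu y₁).fun_sub (hu y₂))).const_mul (w y₁ * w y₂))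
    |>.congr_deriv ?_
  have hsymm := sum_sum_eq_zero_of_antisymm
    (f := fun a b => w a * w b * (sig (u t₀ a - u t₀ b) - 1/2) * (u' a + u' b)) fun a b => by
      rw [← neg_sub (u t₀ a), sig_neg_sub_half]
      ring
  rw [eq_comm, ← sub_eq_zero, ← hsymm]
  simp only [pairGrad, mul_sum, ← sum_sub_distrib]
  exact sum_congr rfl fun _ _ => sum_congr rfl fun _ _ => by ring

end Pairwise

section Simplex

variable {Y : Type*} [Fintype Y]

lemma eventually_pos_add_mul {p : Y → ℝ} (hp : ∀ y, 0 < p y) (v : Y → ℝ) :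
    ∀ᶠ t in 𝓝 (0 : ℝ), ∀ y, 0 < p y + t * v y :=
  eventually_all.2 fun y =>
    ((by fun_prop : Continuous fun t : ℝ => p y + t * v y).tendsto' 0 (p y) (by simp))
      |>.eventually_const_lt (hp y)

lemma eq_of_isMinOn_openSimplex {f : (Y → ℝ) → ℝ} {p G : Y → ℝ}
    (hp : ∀ y, 0 < p y) (hp1 : ∑ y, p y = 1)
    (hmin : ∀ π : Y → ℝ, (∀ y, 0 < π y) → ∑ y, π y = 1 → f p ≤ f π)
    (hf : ∀ v : Y → ℝ, HasDerivAt (fun t => f fun y => p y + t * v y) (∑ y, G y * v y) 0)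
    (a b : Y) : G a = G b := by
  classical
  set v : Y → ℝ := Pi.single a 1 - Pi.single b 1
  have hloc : IsLocalMin (fun t => f fun y => p y + t * v y) 0 := by
    filter_upwards [eventually_pos_add_mul hp v] with t ht
    simpa using hmin _ ht (by simp [sum_add_distrib, ← mul_sum, hp1, v])
  simpa [v, mul_sub, sum_sub_distrib, sub_eq_zero, Pi.single_apply]
    using hloc.hasDerivAt_eq_zero (hf v)

end Simplex

section Loss

variable {Y : Type*}

noncomputable def reward (β : ℝ) (πref π : Y → ℝ) (y : Y) : ℝ :=
  β * Real.log (π y / πref y)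

lemma hasDerivAt_log_add_mul {p : Y → ℝ} (hp : ∀ y, 0 < p y) (v : Y → ℝ) (y : Y) :
    HasDerivAt (fun t => Real.log (p y + t * v y)) (v y / p y) 0 := by
  simpa using (((hasDerivAt_id (0 : ℝ)).mul_const (v y)).const_add (p y)).log
    (by simpa using (hp y).ne')

lemma hasDerivAt_reward_add_mul {β : ℝ} {πref p : Y → ℝ} (href : ∀ y, 0 < πref y)
    (hp : ∀ y, 0 < p y) (v : Y → ℝ) (y : Y) :
    HasDerivAt (fun t => reward β πref (fun y => p y + t * v y) y) (β * (v y / p y)) 0 := by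
  have hlin := (((hasDerivAt_id (0 : ℝ)).mul_const (v y)).const_add (p y)).div_const (πref y)
  refine ((hlin.log (by simpa using (div_pos (hp y) (href y)).ne')).const_mul β).congr_deriv ?_
  simp only [id, zero_mul, add_zero]
  field_simp [(href y).ne']

variable [Fintype Y]

noncomputable def edpoLoss (α β : ℝ) (μ πref μhat shat π : Y → ℝ) : ℝ :=
  -β * (∑ y, μhat y * shat y * Real.log (π y))
    + (α/2) * ∑ y₁, ∑ y₂, μ y₁ * μ y₂ *
        KLB (sig (reward β πref π y₁ - reward β πref π y₂))

lemma hasDerivAt_edpoLoss_add_mul {α β : ℝ} {μ πref μhat shat p : Y → ℝ}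
    (href : ∀ y, 0 < πref y) (hp : ∀ y, 0 < p y) (v : Y → ℝ) :
    HasDerivAt (fun t => edpoLoss α β μ πref μhat shat fun y => p y + t * v y)
      (∑ y, β * (α * μ y * pairGrad μ (reward β πref p) y - μhat y * shat y) / p y * v y)
      0 := by
  have hpair := hasDerivAt_sum_sum_KLB μ (hasDerivAt_reward_add_mul (β := β) href hp v)
  simp only [zero_mul, add_zero] at hpair
  refine (((HasDerivAt.fun_sum fun y _ => (hasDerivAt_log_add_mul hp v y).const_mul
    (μhat y * shat y)).const_mul (-β)).fun_add (hpair.const_mul (α/2))).congr_deriv ?_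
  simp only [mul_sum, ← sum_add_distrib]
  refine sum_congr rfl fun y _ => ?_
  ring

end Loss

theorem stmt_6_general {Y : Type*} [Fintype Y]
    (μ : Y → ℝ) (hμ : ∀ y, 0 < μ y)
    (πref : Y → ℝ) (href : ∀ y, 0 < πref y)
    (μhat : Y → ℝ)
    (shat : Y → ℝ) (hshat : ∑ y, μhat y * shat y = 0)
    (α β : ℝ) (hβ : 0 < β)
    (L : (Y → ℝ) → ℝ)
    (hL : ∀ π : Y → ℝ, L π =
      -β * (∑ y, μhat y * shat y * Real.log (π y))
        + (α/2) * ∑ y1, ∑ y2, μ y1 * μ y2 *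
            KLB (sig (β * Real.log (π y1 / πref y1) - β * Real.log (π y2 / πref y2))))
    (πstar : Y → ℝ) (hπstar : ∀ y, 0 < πstar y) (hπstar1 : ∑ y, πstar y = 1)
    (hmin : ∀ π : Y → ℝ, (∀ y, 0 < π y) → (∑ y, π y = 1) → L πstar ≤ L π) :
    ∀ y, α * (∑ y', μ y' *
        (sig (β * Real.log (πstar y / πref y) - β * Real.log (πstar y' / πref y')) - 1/2))
      = (μhat y / μ y) * shat y := by
  set g : Y → ℝ := fun y =>
    α * μ y * pairGrad μ (reward β πref πstar) y - μhat y * shat y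
  have hg_sum : ∑ y, g y = 0 := by
    simp only [g, sum_sub_distrib, hshat, mul_assoc, ← mul_sum, sum_mul_pairGrad, mul_zero,
      sub_zero]
  have hL' : L = edpoLoss α β μ πref μhat shat := funext hL
  have hgrad (a b : Y) : β * g a / πstar a = β * g b / πstar b :=
    eq_of_isMinOn_openSimplex hπstar hπstar1 hmin
      (hL' ▸ hasDerivAt_edpoLoss_add_mul href hπstar) a b
  have hg (y : Y) : g y = 0 := by
    have hc : ∑ y', πstar y' * (β * g y / πstar y) = ∑ y', β * g y' :=
      sum_congr rfl fun y' _ => by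
        rw [hgrad y y']
        field_simp [(hπstar y').ne']
    rw [← sum_mul, hπstar1, one_mul, ← mul_sum, hg_sum, mul_zero,
      div_eq_zero_iff, mul_eq_zero] at hc
    simpa [hβ.ne', (hπstar y).ne'] using hc
  intro y
  show α * pairGrad μ (reward β πref πstar) y = μhat y / μ y * shat y
  rw [div_mul_eq_mul_div, eq_div_iff (hμ y).ne', ← sub_eq_zero.1 (hg y)]
  ring

theorem stmt_6 {Y : Type*} [Fintype Y] [Nonempty Y]
    (μ : Y → ℝ) (hμ : ∀ y, 0 < μ y) (hμ1 : ∑ y, μ y = 1)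
    (πref : Y → ℝ) (href : ∀ y, 0 < πref y) (href1 : ∑ y, πref y = 1)
    (μhat : Y → ℝ) (hμhat0 : ∀ y, 0 ≤ μhat y) (hμhat1 : ∑ y, μhat y = 1)
    (shat : Y → ℝ) (hshat : ∑ y, μhat y * shat y = 0)
    (α β : ℝ) (hα : 0 < α) (hβ : 0 < β)
    (L : (Y → ℝ) → ℝ)
    (hL : ∀ π : Y → ℝ, L π =
      -β * (∑ y, μhat y * shat y * Real.log (π y))
        + (α/2) * ∑ y1, ∑ y2, μ y1 * μ y2 *
            KLB (sig (β * Real.log (π y1 / πref y1) - β * Real.log (π y2 / πref y2))))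
    (πstar : Y → ℝ) (hπstar : ∀ y, 0 < πstar y) (hπstar1 : ∑ y, πstar y = 1)
    (hmin : ∀ π : Y → ℝ, (∀ y, 0 < π y) → (∑ y, π y = 1) → L πstar ≤ L π) :
    ∀ y, α * (∑ y', μ y' *
        (sig (β * Real.log (πstar y / πref y) - β * Real.log (πstar y' / πref y')) - 1/2))
      = (μhat y / μ y) * shat y :=
  stmt_6_general μ hμ πref href μhat shat hshat α β hβ L hL πstar hπstar hπstar1 hmin
end

section
/- (Corollary 3.3) Let Y be a nonempty finite type, μ ∈ Δ with μ(y) > 0 for all y, π_ref, π* ∈ Δ, μ̂ a probability distribution on Y, ŝ : Y → ℝ, and α, β > 0. Assume the stationarity condition holds for every y ∈ Y: α·∑_{y'} μ(y')·[σ(β·log(π*(y)/π_ref(y)) − β·log(π*(y')/π_ref(y'))) − 1/2] = (μ̂(y)/μ(y))·ŝ(y), and assume there exists y0 ∈ Y with μ̂(y0) = 0 or ŝ(y0) = 0. Then with C := π*(y0)/π_ref(y0): (i) π*(y)/π_ref(y) = C for every y with μ̂(y) = 0 or ŝ(y) = 0; (ii) π*(y)/π_ref(y) > C for every y with μ̂(y)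 > 0 and ŝ(y) > 0; (iii) π*(y)/π_ref(y) < C for every y with μ̂(y) > 0 and ŝ(y) < 0. -/
lemma sig_strictMono : StrictMono sig := by
  intro a b hab
  unfold sig
  have h1 : Real.exp (-b) < Real.exp (-a) := Real.exp_lt_exp.mpr (by linarith)
  have h2 : 0 < 1 + Real.exp (-b) := by positivity
  have h3 : 0 < 1 + Real.exp (-a) := by positivity
  exact one_div_lt_one_div_of_lt h2 (by linarith)

theorem stmt_7 {Y : Type*} [Fintype Y] [Nonempty Y]
    (μ : Y → ℝ) (hμ : ∀ y, 0 < μ y) (hμ1 : ∑ y, μ y = 1)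
    (πref : Y → ℝ) (href : ∀ y, 0 < πref y) (href1 : ∑ y, πref y = 1)
    (πstar : Y → ℝ) (hπstar : ∀ y, 0 < πstar y) (hπstar1 : ∑ y, πstar y = 1)
    (μhat : Y → ℝ) (hμhat0 : ∀ y, 0 ≤ μhat y) (hμhat1 : ∑ y, μhat y = 1)
    (shat : Y → ℝ)
    (α β : ℝ) (hα : 0 < α) (hβ : 0 < β)
    (hstat : ∀ y, α * (∑ y', μ y' *
        (sig (β * Real.log (πstar y / πref y) - β * Real.log (πstar y' / πref y')) - 1/2))
      = (μhat y / μ y) * shat y)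
    (y0 : Y) (hy0 : μhat y0 = 0 ∨ shat y0 = 0) :
    (∀ y, (μhat y = 0 ∨ shat y = 0) → πstar y / πref y = πstar y0 / πref y0) ∧
    (∀ y, 0 < μhat y → 0 < shat y → πstar y0 / πref y0 < πstar y / πref y) ∧
    (∀ y, 0 < μhat y → shat y < 0 → πstar y / πref y < πstar y0 / πref y0) := by
  set L : Y → ℝ := fun y => Real.log (πstar y / πref y) with hL
  set G : ℝ → ℝ := fun t => ∑ y', μ y' * (sig (β * t - β * L y') - 1/2) with hG
  have hGmono : StrictMono G := by
    intro a b hab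
    apply Finset.sum_lt_sum_of_nonempty Finset.univ_nonempty
    intro y' _
    have : sig (β * a - β * L y') < sig (β * b - β * L y') := by
      apply sig_strictMono
      nlinarith
    nlinarith [hμ y']
  have hstat' : ∀ y, α * G (L y) = (μhat y / μ y) * shat y := hstat
  have hr : ∀ y, 0 < πstar y / πref y := fun y => div_pos (hπstar y) (href y)
  have hGy0 : G (L y0) = 0 := by
    have h := hstat' y0
    rcases hy0 with h0 | h0 <;>
    · rw [h0] at h
      simp at h
      rcases h with h | h
      · exact absurd h (ne_of_gt hα)
      · exact h
  have key : ∀ y a, G (L y) = a → (a = 0 → πstar y / πref y = πstar y0 / πref y0) := by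
    intro y a hGa ha
    subst ha
    have : L y = L y0 := hGmono.injective (hGa.trans hGy0.symm)
    have := congrArg Real.exp this
    rwa [Real.exp_log (hr y), Real.exp_log (hr y0)] at this
  refine ⟨?_, ?_, ?_⟩
  · intro y hy
    apply key y (G (L y)) rfl
    have h := hstat' y
    rcases hy with h0 | h0 <;> rw [h0] at h <;> simp at h <;>
    · rcases h with h | h
      · exact absurd h (ne_of_gt hα)
      · exact h
  · intro y hμy hsy
    have h := hstat' y
    have hrhs : 0 < (μhat y / μ y) * shat y := mul_pos (div_pos hμy (hμ y)) hsy
    have hGy : 0 < G (L y) := by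
      by_contra hc
      push_neg at hc
      nlinarith
    have hlt : L y0 < L y := by
      by_contra hc
      push_neg at hc
      have := hGmono.le_iff_le.mpr hc
      rw [hGy0] at this
      linarith
    have := Real.exp_lt_exp.mpr hlt
    rwa [Real.exp_log (hr y), Real.exp_log (hr y0)] at this
  · intro y hμy hsy
    have h := hstat' y
    have hrhs : (μhat y / μ y) * shat y < 0 :=
      mul_neg_of_pos_of_neg (div_pos hμy (hμ y)) hsy
    have hGy : G (L y) < 0 := by
      by_contra hc
      push_neg at hc
      nlinarith
    have hlt : L y < L y0 := by
      by_contra hc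
      push_neg at hc
      have := hGmono.le_iff_le.mpr hc
      rw [hGy0] at this
      linarith
    have := Real.exp_lt_exp.mpr hlt
    rwa [Real.exp_log (hr y), Real.exp_log (hr y0)] at this
end

section
/- (Theorem 4.2) Let Z be a nonempty finite type, μ ∈ Δ with μ(z) > 0 for all z ∈ Z, π_ref ∈ Δ, μ̂ a probability distribution on Z, ŝ : Z → ℝ, and β > 0. For α > 0 define the PRO loss on Δ by L_α(π) := −β·∑_z μ̂(z)·ŝ(z)·log π(z) + (α/2)·∑_{z1, z2} μ(z1)·μ(z2)·KLB(σ(r_π(z1) − r_π(z2))), where r_π(z) := β·log(π(z)/π_ref(z)). Then there exists a threshold α₀ ≥ 0 such that for every α > α₀ the loss L_α attains a minimum on Δ, i.e., there exists π* ∈ Δ with L_α(π*) ≤ L_α(π) for all π ∈ Δ. -/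
/-!
Since `KLB (sig r) = log ((1 + cosh r) / 2) / 2`, the preference term is nonnegative and grows at
least like `r / 2`. If `min π = exp (-M)`, some coordinate of `π` is at least `1 / |Z|`, so some
reward gap is at least `β (M - const)` and the preference term is at least
`(α / 2) m² β M / 2 - const`, with `m = min μ`; the fidelity term is at least `-β C M` with
`C = ∑ |μ̂ ŝ|`. For `α > 4 C / m²` the loss thus tends to `+∞` at the boundary of the simplex, so
its sublevel sets lie in a compact set `{π ≥ ε}` and the minimum is attained.
-/

theorem KLB_sig (r : ℝ) : KLB (sig r) = Real.log ((1 + Real.cosh r) / 2) / 2 := by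
  have hprod : (1 / 2 : ℝ) / sig r * ((1 / 2) / (1 - sig r)) = (1 + Real.cosh r) / 2 := by
    rw [sig, Real.cosh_eq, Real.exp_neg]
    field_simp
    ring
  have hne : (1 / 2 : ℝ) / sig r * ((1 / 2) / (1 - sig r)) ≠ 0 := hprod ▸ by positivity
  rw [KLB, ← mul_add, ← Real.log_mul (left_ne_zero_of_mul hne) (right_ne_zero_of_mul hne), hprod]
  ring

theorem KLB_sig_nonneg (r : ℝ) : 0 ≤ KLB (sig r) := by
  rw [KLB_sig]
  have := Real.one_le_cosh r
  have : 0 ≤ Real.log ((1 + Real.cosh r) / 2) := Real.log_nonneg (by linarith)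
  positivity

theorem half_sub_log_two_le_KLB_sig (r : ℝ) : r / 2 - Real.log 2 ≤ KLB (sig r) := by
  have hle : Real.exp r / 4 ≤ (1 + Real.cosh r) / 2 := by
    rw [Real.cosh_eq]; linarith [Real.exp_pos (-r)]
  have := Real.log_le_log (by positivity) hle
  rw [Real.log_div (Real.exp_pos r).ne' (by norm_num), Real.log_exp,
    show (4 : ℝ) = 2 ^ 2 by norm_num, Real.log_pow] at this
  rw [KLB_sig]
  push_cast at this
  linarith

theorem continuous_KLB_sig : Continuous fun r => KLB (sig r) := by
  simp_rw [KLB_sig]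
  fun_prop (disch := intros; positivity)

section Simplex

variable {Z : Type*} [Fintype Z]

variable (Z) in
def openSimplex : Set (Z → ℝ) := {π | (∀ z, 0 < π z) ∧ ∑ z, π z = 1}

theorem openSimplex_subset_stdSimplex : openSimplex Z ⊆ stdSimplex ℝ Z :=
  fun _ hπ => ⟨fun z => (hπ.1 z).le, hπ.2⟩

theorem le_one_of_mem_openSimplex {π : Z → ℝ} (hπ : π ∈ openSimplex Z) (z : Z) : π z ≤ 1 :=
  (mem_Icc_of_mem_stdSimplex (openSimplex_subset_stdSimplex hπ) z).2

theorem exists_inv_card_le_of_sum_eq_one [Nonempty Z] {π : Z → ℝ} (hπ : ∑ z, π z = 1) :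
    ∃ z, 1 / Fintype.card Z ≤ π z := by
  obtain ⟨z, -, hz⟩ := Finset.exists_le_of_sum_le Finset.univ_nonempty
    (f := fun _ => 1 / (Fintype.card Z : ℝ)) (g := π) (by simp [hπ])
  exact ⟨z, hz⟩

theorem IsCompact.exists_isMinOn_of_le_outside {X α : Type*} [TopologicalSpace X]
    [LinearOrder α] [TopologicalSpace α] [ClosedIicTopology α] {f : X → α} {K S : Set X}
    (hK : IsCompact K) (hKS : K ⊆ S) (hf : ContinuousOn f K) {x₀ : X} (hx₀ : x₀ ∈ K)
    (hout : ∀ x ∈ S \ K, f x₀ ≤ f x) : ∃ x ∈ S, IsMinOn f S x := by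
  obtain ⟨x, hxK, hmin⟩ := hK.exists_isMinOn ⟨x₀, hx₀⟩ hf
  refine ⟨x, hKS hxK, fun y hy => ?_⟩
  by_cases hyK : y ∈ K
  exacts [hmin hyK, (hmin hx₀).trans (hout y ⟨hy, hyK⟩)]

theorem exists_isMinOn_openSimplex_of_coercive [Nonempty Z] {f : (Z → ℝ) → ℝ}
    (hf : ContinuousOn f (openSimplex Z)) {δ c : ℝ} (hδ : 0 < δ)
    (hcoer : ∀ π ∈ openSimplex Z, ∀ zs, (∀ z, π zs ≤ π z) → δ * -Real.log (π zs) - c ≤ f π) :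
    ∃ π ∈ openSimplex Z, IsMinOn f (openSimplex Z) π := by
  set u : Z → ℝ := fun _ => 1 / Fintype.card Z
  have hu : u ∈ openSimplex Z := ⟨fun _ => by positivity, by simp [u]⟩
  set ε := min (1 / (Fintype.card Z : ℝ)) (Real.exp (-(f u + c) / δ))
  have hε : 0 < ε := lt_min (by positivity) (Real.exp_pos _)
  set K := stdSimplex ℝ Z ∩ {π | ∀ z, ε ≤ π z}
  have hK : IsCompact K := by
    refine (isCompact_stdSimplex ℝ Z).inter_right ?_
    simp only [Set.ofPred_forall]
    exact isClosed_iInter fun z => isClosed_le continuous_const (continuous_apply z)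
  have hKS : K ⊆ openSimplex Z := fun π hπ => ⟨fun z => hε.trans_le (hπ.2 z), hπ.1.2⟩
  refine hK.exists_isMinOn_of_le_outside hKS (hf.mono hKS)
    ⟨openSimplex_subset_stdSimplex hu, fun _ => min_le_left _ _⟩ fun π ⟨hπ, hπK⟩ => ?_
  obtain ⟨z, hz⟩ : ∃ z, π z < ε := by
    by_contra! h
    exact hπK ⟨openSimplex_subset_stdSimplex hπ, h⟩
  obtain ⟨zs, -, hzs⟩ := Finset.exists_min_image Finset.univ π Finset.univ_nonempty
  have hsmall : π zs < Real.exp (-(f u + c) / δ) :=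
    (hzs z (Finset.mem_univ z)).trans_lt (hz.trans_le (min_le_right _ _))
  rw [← Real.log_lt_iff_lt_exp (hπ.1 zs), lt_div_iff₀ hδ] at hsmall
  linarith [hcoer π hπ zs fun z => hzs z (Finset.mem_univ z)]

end Simplex

section PROLoss

variable {Z : Type*} [Fintype Z]

noncomputable def proReward (β : ℝ) (πref π : Z → ℝ) (z : Z) : ℝ :=
  β * Real.log (π z / πref z)

noncomputable def proLoss (μ πref μhat shat : Z → ℝ) (β α : ℝ) (π : Z → ℝ) : ℝ :=
  -β * (∑ z, μhat z * shat z * Real.log (π z))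
    + (α/2) * ∑ z1, ∑ z2, μ z1 * μ z2 *
        KLB (sig (proReward β πref π z1 - proReward β πref π z2))

theorem continuousOn_proReward (β : ℝ) {πref : Z → ℝ} (href : ∀ z, 0 < πref z) (z : Z) :
    ContinuousOn (fun π => proReward β πref π z) (openSimplex Z) :=
  continuousOn_const.mul <| ((continuous_apply z).continuousOn.div_const _).log
    fun _ hπ => div_ne_zero (hπ.1 z).ne' (href z).ne'

theorem continuousOn_proLoss (μ πref μhat shat : Z → ℝ) (β α : ℝ) (href : ∀ z, 0 < πref z) :
    ContinuousOn (proLoss μ πref μhat shat β α) (openSimplex Z) := by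
  have hlog (z : Z) : ContinuousOn (fun π : Z → ℝ => Real.log (π z)) (openSimplex Z) :=
    (continuous_apply z).continuousOn.log fun _ hπ => (hπ.1 z).ne'
  have hKLB (z1 z2 : Z) : ContinuousOn
      (fun π => KLB (sig (proReward β πref π z1 - proReward β πref π z2))) (openSimplex Z) :=
    continuous_KLB_sig.comp_continuousOn
      ((continuousOn_proReward β href z1).sub (continuousOn_proReward β href z2))
  unfold proLoss
  fun_prop

theorem sum_mul_log_le {a π : Z → ℝ} {zs : Z} (hπ : π ∈ openSimplex Z)
    (hzs : ∀ z, π zs ≤ π z) :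
    ∑ z, a z * Real.log (π z) ≤ (∑ z, |a z|) * -Real.log (π zs) := by
  rw [Finset.sum_mul]
  refine Finset.sum_le_sum fun z _ => ?_
  have hlog_le : Real.log (π zs) ≤ Real.log (π z) := Real.log_le_log (hπ.1 zs) (hzs z)
  have hlog_nonpos (z : Z) : Real.log (π z) ≤ 0 :=
    Real.log_nonpos (hπ.1 z).le (le_one_of_mem_openSimplex hπ z)
  calc a z * Real.log (π z) ≤ |a z| * |Real.log (π z)| :=
        (le_abs_self _).trans (abs_mul _ _).le
    _ ≤ |a z| * -Real.log (π zs) := by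
      gcongr
      exact abs_le.2 ⟨by linarith, by linarith [hlog_nonpos zs, hlog_nonpos z]⟩

theorem sq_mul_KLB_sig_le_sum {μ : Z → ℝ} {m : ℝ} (hm : 0 ≤ m) (hμ : ∀ z, m ≤ μ z)
    (r : Z → ℝ) (i j : Z) :
    m ^ 2 * KLB (sig (r i - r j)) ≤ ∑ z1, ∑ z2, μ z1 * μ z2 * KLB (sig (r z1 - r z2)) := by
  have hterm (z1 z2 : Z) : 0 ≤ μ z1 * μ z2 * KLB (sig (r z1 - r z2)) :=
    mul_nonneg (mul_nonneg (hm.trans (hμ z1)) (hm.trans (hμ z2))) (KLB_sig_nonneg _)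
  calc m ^ 2 * KLB (sig (r i - r j)) ≤ μ i * μ j * KLB (sig (r i - r j)) := by
        rw [sq]
        exact mul_le_mul_of_nonneg_right
          (mul_le_mul (hμ i) (hμ j) hm (hm.trans (hμ i))) (KLB_sig_nonneg _)
    _ ≤ ∑ z2, μ i * μ z2 * KLB (sig (r i - r z2)) :=
        Finset.single_le_sum (fun z2 _ => hterm i z2) (Finset.mem_univ j)
    _ ≤ _ :=
        Finset.single_le_sum (f := fun z1 => ∑ z2, μ z1 * μ z2 * KLB (sig (r z1 - r z2)))
          (fun z1 _ => Finset.sum_nonneg fun z2 _ => hterm z1 z2) (Finset.mem_univ i)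

theorem le_proReward_sub {β : ℝ} {πref π : Z → ℝ} (hβ : 0 ≤ β) (href : πref ∈ openSimplex Z)
    (hπ : ∀ z, 0 < π z) (i j : Z) :
    β * (Real.log (π i) - Real.log (π j) + Real.log (πref j)) ≤
      proReward β πref π i - proReward β πref π j := by
  have hi : Real.log (πref i) ≤ 0 :=
    Real.log_nonpos (href.1 i).le (le_one_of_mem_openSimplex href i)
  unfold proReward
  rw [Real.log_div (hπ i).ne' (href.1 i).ne', Real.log_div (hπ j).ne' (href.1 j).ne']
  nlinarith [mul_nonneg hβ (neg_nonneg.2 hi)]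

theorem proLoss_coercive {μ πref μhat shat : Z → ℝ} {β α m p : ℝ} (hm : 0 ≤ m)
    (hμ : ∀ z, m ≤ μ z) (href : πref ∈ openSimplex Z) (hp : 0 < p) (hp_le : ∀ z, p ≤ πref z)
    (hβ : 0 ≤ β) (hα : 0 ≤ α) {π : Z → ℝ} (hπ : π ∈ openSimplex Z) {zs : Z}
    (hzs : ∀ z, π zs ≤ π z) :
    β * (α * m ^ 2 / 4 - ∑ z, |μhat z * shat z|) * -Real.log (π zs)
        - α / 2 * m ^ 2 * (β * (Real.log (Fintype.card Z) - Real.log p) / 2 + Real.log 2)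
      ≤ proLoss μ πref μhat shat β α π := by
  have : Nonempty Z := ⟨zs⟩
  obtain ⟨z1, hz1⟩ := exists_inv_card_le_of_sum_eq_one hπ.2
  have hfid := sum_mul_log_le (a := fun z => μhat z * shat z) hπ hzs
  have hlog_z1 : -Real.log (Fintype.card Z) ≤ Real.log (π z1) := by
    rw [← Real.log_inv, ← one_div]
    exact Real.log_le_log (by positivity) hz1
  have hlog_p : Real.log p ≤ Real.log (πref zs) := Real.log_le_log hp (hp_le zs)
  have hpref : m ^ 2 * (β * (-Real.log (π zs) - (Real.log (Fintype.card Z) - Real.log p)) / 2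
      - Real.log 2) ≤ ∑ z1, ∑ z2, μ z1 * μ z2 *
        KLB (sig (proReward β πref π z1 - proReward β πref π z2)) := by
    refine (mul_le_mul_of_nonneg_left ?_ (sq_nonneg m)).trans
      (sq_mul_KLB_sig_le_sum hm hμ _ z1 zs)
    have hgap := le_proReward_sub hβ href hπ.1 z1 zs
    have hKLB := half_sub_log_two_le_KLB_sig (proReward β πref π z1 - proReward β πref π zs)
    have : β * (-Real.log (π zs) - (Real.log (Fintype.card Z) - Real.log p)) ≤
        β * (Real.log (π z1) - Real.log (π zs) + Real.log (πref zs)) :=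
      mul_le_mul_of_nonneg_left (by linarith) hβ
    linarith
  unfold proLoss
  nlinarith [mul_le_mul_of_nonneg_left hfid hβ,
    mul_le_mul_of_nonneg_left hpref (by positivity : 0 ≤ α / 2)]

end PROLoss

theorem stmt_10_general {Z : Type*} [Fintype Z] [Nonempty Z]
    (μ : Z → ℝ) (hμ : ∀ z, 0 < μ z)
    (πref : Z → ℝ) (href : ∀ z, 0 < πref z) (href1 : ∑ z, πref z = 1)
    (μhat : Z → ℝ)
    (shat : Z → ℝ) (β : ℝ) (hβ : 0 < β)
    (L : ℝ → (Z → ℝ) → ℝ)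
    (hL : ∀ (α : ℝ) (π : Z → ℝ), L α π =
      -β * (∑ z, μhat z * shat z * Real.log (π z))
        + (α/2) * ∑ z1, ∑ z2, μ z1 * μ z2 *
            KLB (sig (β * Real.log (π z1 / πref z1) - β * Real.log (π z2 / πref z2)))) :
    ∃ α₀ : ℝ, 0 ≤ α₀ ∧ ∀ α > α₀,
      ∃ πstar : Z → ℝ, (∀ z, 0 < πstar z) ∧ (∑ z, πstar z = 1) ∧
        ∀ π : Z → ℝ, (∀ z, 0 < π z) → (∑ z, π z = 1) → L α πstar ≤ L α π := by
  obtain ⟨zm, -, hzm⟩ := Finset.exists_min_image Finset.univ μ Finset.univ_nonempty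
  obtain ⟨zp, -, hzp⟩ := Finset.exists_min_image Finset.univ πref Finset.univ_nonempty
  set C := ∑ z, |μhat z * shat z|
  have hC : 0 ≤ C := Finset.sum_nonneg fun z _ => abs_nonneg _
  have hm := hμ zm
  refine ⟨4 * C / μ zm ^ 2, by positivity, fun α hα => ?_⟩
  rw [gt_iff_lt, div_lt_iff₀ (by positivity)] at hα
  have hδ : 0 < β * (α * μ zm ^ 2 / 4 - C) := mul_pos hβ (by linarith)
  have hLα : L α = proLoss μ πref μhat shat β α := funext (hL α)
  obtain ⟨πstar, ⟨hpos, hsum⟩, hmin⟩ := exists_isMinOn_openSimplex_of_coercive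
    (continuousOn_proLoss μ πref μhat shat β α href) hδ fun π hπ zs hzs =>
      proLoss_coercive hm.le (fun z => hzm z (Finset.mem_univ z)) ⟨href, href1⟩ (href zp)
        (fun z => hzp z (Finset.mem_univ z)) hβ.le (by nlinarith) hπ hzs
  exact ⟨πstar, hpos, hsum, fun π hπ hπ1 => hLα ▸ hmin ⟨hπ, hπ1⟩⟩

theorem stmt_10 {Z : Type*} [Fintype Z] [Nonempty Z]
    (μ : Z → ℝ) (hμ : ∀ z, 0 < μ z) (hμ1 : ∑ z, μ z = 1)
    (πref : Z → ℝ) (href : ∀ z, 0 < πref z) (href1 : ∑ z, πref z = 1)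
    (μhat : Z → ℝ) (hμhat0 : ∀ z, 0 ≤ μhat z) (hμhat1 : ∑ z, μhat z = 1)
    (shat : Z → ℝ) (β : ℝ) (hβ : 0 < β)
    (L : ℝ → (Z → ℝ) → ℝ)
    (hL : ∀ (α : ℝ) (π : Z → ℝ), L α π =
      -β * (∑ z, μhat z * shat z * Real.log (π z))
        + (α/2) * ∑ z1, ∑ z2, μ z1 * μ z2 *
            KLB (sig (β * Real.log (π z1 / πref z1) - β * Real.log (π z2 / πref z2)))) :
    ∃ α₀ : ℝ, 0 ≤ α₀ ∧ ∀ α > α₀,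
      ∃ πstar : Z → ℝ, (∀ z, 0 < πstar z) ∧ (∑ z, πstar z = 1) ∧
        ∀ π : Z → ℝ, (∀ z, 0 < π z) → (∑ z, π z = 1) → L α πstar ≤ L α π :=
  stmt_10_general μ hμ πref href href1 μhat shat β hβ L hL
end
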